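/- arXiv:2311.09512 — 2 statements merged into one kernel-verified Lean document; each statement's English description precedes it below -/
import Mathlib

section
/- Let S = ((X,d), (f_i)_{i∈{1,…,n}}) be an iterated function system with n ≥ 2, where each f_i satisfies d(f_i(x), f_i(y)) ≤ c_i·d(x,y) for all x,y ∈ X with c_i ∈ [0,1). Let γ_i denote the unique fixed point of f_i and M = max_{i,j∈{1,…,n}} d(γ_i, γ_j). If ρ_1, …, ρ_n are nonnegative reals satisfying ρ_i = c_i·(M + max_{j∈{1,…,n}\{i}} ρ_j) for every i ∈ {1,…,n}, then the attractor A_S of S is contained in the union ⋃_{i∈{1,…,n}} B[γ_i, ρ_i] of the closed balls B[γ_i, ρ_i] = {x ∈ X : d(x, γ_i) ≤ ρ_i}. -/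
/-!
Let `φ(x) = min_i (d(x, γ_i) - ρ_i)`, so that the union of the balls is `{φ ≤ 0}`. The relations
between the radii imply `c_i (d(γ_j, γ_i) + ρ_j) ≤ ρ_i` for all `i, j`, and with the triangle
inequality through the centre `γ_j` realising the minimum `φ(x)` this gives `φ(f_i x) ≤ c_i φ(x)`.
On the attractor `φ` attains its maximum at some `f_i a` with `a` in the attractor, so the maximum
`t` satisfies `t ≤ c_i t` and hence `t ≤ 0`.
-/

open Metric

theorem IsCompact.nonpos_of_comp_le_mul {X ι : Type*} [TopologicalSpace X] {A : Set X}
    (hA : IsCompact A) {f : ι → X → X} (hcover : A ⊆ ⋃ i, f i '' A) {φ : X → ℝ}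
    (hφ : ContinuousOn φ A) {c : ι → ℝ} (hc0 : ∀ i, 0 ≤ c i) (hc1 : ∀ i, c i < 1)
    (hφf : ∀ i, ∀ x ∈ A, φ (f i x) ≤ c i * φ x) :
    ∀ x ∈ A, φ x ≤ 0 := by
  intro x hx
  obtain ⟨y, hyA, hy⟩ := hA.exists_isMaxOn ⟨x, hx⟩ hφ
  obtain ⟨i, a, haA, rfl⟩ := Set.mem_iUnion.mp (hcover hyA)
  have hmax : φ (f i a) ≤ c i * φ (f i a) :=
    (hφf i a haA).trans (mul_le_mul_of_nonneg_left (hy haA) (hc0 i))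
  have : φ (f i a) ≤ 0 := by nlinarith [hc1 i]
  exact (hy hx).trans this

section MinBallExcess

variable {X ι : Type*} [PseudoMetricSpace X] [Fintype ι] [Nonempty ι]

noncomputable def minBallExcess (γ : ι → X) (ρ : ι → ℝ) (x : X) : ℝ :=
  Finset.univ.inf' Finset.univ_nonempty fun i => dist x (γ i) - ρ i

variable {γ : ι → X} {ρ : ι → ℝ}

theorem continuous_minBallExcess : Continuous (minBallExcess γ ρ) :=
  Continuous.finset_inf'_apply _ fun _ _ => (continuous_id.dist continuous_const).sub
    continuous_const

theorem minBallExcess_nonpos_iff {x : X} :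
    minBallExcess γ ρ x ≤ 0 ↔ x ∈ ⋃ i, closedBall (γ i) (ρ i) := by
  simp [minBallExcess, Finset.inf'_le_iff]

theorem minBallExcess_le (x : X) (i : ι) : minBallExcess γ ρ x ≤ dist x (γ i) - ρ i :=
  Finset.inf'_le _ (Finset.mem_univ i)

theorem exists_minBallExcess_eq (x : X) : ∃ j, minBallExcess γ ρ x = dist x (γ j) - ρ j := by
  obtain ⟨j, -, hj⟩ := Finset.exists_mem_eq_inf' Finset.univ_nonempty
    fun k => dist x (γ k) - ρ k
  exact ⟨j, hj⟩

theorem minBallExcess_map_le {f : X → X} {c : ℝ} {i : ι} (hc : 0 ≤ c)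
    (hf : ∀ x, dist (f x) (γ i) ≤ c * dist x (γ i))
    (hρ : ∀ j, c * (dist (γ j) (γ i) + ρ j) ≤ ρ i) (x : X) :
    minBallExcess γ ρ (f x) ≤ c * minBallExcess γ ρ x := by
  obtain ⟨j, hj⟩ := exists_minBallExcess_eq (γ := γ) (ρ := ρ) x
  calc minBallExcess γ ρ (f x)
      ≤ dist (f x) (γ i) - ρ i := minBallExcess_le _ i
    _ ≤ c * (dist x (γ j) + dist (γ j) (γ i)) - c * (dist (γ j) (γ i) + ρ j) := by
        gcongr
        · exact (hf x).trans (mul_le_mul_of_nonneg_left (dist_triangle _ _ _) hc)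
        · exact hρ j
    _ = c * minBallExcess γ ρ x := by rw [hj]; ring

end MinBallExcess

/-- If `S = ((X,d), (f_i)_{i ∈ {1,…,n}})` is an IFS with `n ≥ 2`, each `f_i` satisfying
`d(f_i x, f_i y) ≤ c_i · d(x,y)` with `c_i ∈ [0,1)`, `γ_i` is the fixed point of `f_i`,
`M = max_{i,j} d(γ_i, γ_j)`, and the nonnegative reals `ρ_1, …, ρ_n` satisfy
`ρ_i = c_i (M + max_{j ≠ i} ρ_j)` for every `i`, then the attractor `A` of `S`
(the nonempty compact set with `A = ⋃ i, f_i(A)`) is contained in `⋃ i, B[γ_i, ρ_i]`. -/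
theorem attractor_subset_union_closedBalls
    {X : Type*} [MetricSpace X]
    {n : ℕ} (hn : 2 ≤ n)
    (f : Fin n → X → X) (c : Fin n → ℝ)
    (hc0 : ∀ i, 0 ≤ c i) (hc1 : ∀ i, c i < 1)
    (hlip : ∀ i, ∀ x y : X, dist (f i x) (f i y) ≤ c i * dist x y)
    (γ : Fin n → X) (hγ : ∀ i, f i (γ i) = γ i)
    (M : ℝ)
    (hM : M = Finset.univ.sup'
      ⟨(⟨0, by omega⟩, ⟨0, by omega⟩), Finset.mem_univ _⟩
      (fun p : Fin n × Fin n => dist (γ p.1) (γ p.2)))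
    (ρ : Fin n → ℝ) (hρ0 : ∀ i, 0 ≤ ρ i)
    (heq : ∀ i, ρ i = c i * (M + (Finset.univ.erase i).sup'
      (Finset.card_pos.mp (by
        rw [Finset.card_erase_of_mem (Finset.mem_univ i), Finset.card_univ,
          Fintype.card_fin]
        omega)) ρ))
    (A : Set X) (hA : IsCompact A)
    (hself : A = ⋃ i, f i '' A) :
    A ⊆ ⋃ i, Metric.closedBall (γ i) (ρ i) := by
  have : Nonempty (Fin n) := ⟨⟨0, by omega⟩⟩
  have hρ : ∀ i j, c i * (dist (γ j) (γ i) + ρ j) ≤ ρ i := by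
    intro i j
    rcases eq_or_ne j i with rfl | hji
    · nlinarith [hc0 j, hc1 j, hρ0 j, dist_self (γ j)]
    · rw [heq i]
      gcongr
      · exact hc0 i
      · exact hM ▸ Finset.le_sup' (fun p : Fin n × Fin n => dist (γ p.1) (γ p.2))
          (Finset.mem_univ (j, i))
      · exact Finset.le_sup' ρ (Finset.mem_erase.mpr ⟨hji, Finset.mem_univ j⟩)
  have hcontract : ∀ i, ∀ x ∈ A, minBallExcess γ ρ (f i x) ≤ c i * minBallExcess γ ρ x :=
    fun i x _ => minBallExcess_map_le (hc0 i) (fun y => by simpa only [hγ i] using hlip i y (γ i)) (hρ i) x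
  intro x hx
  exact minBallExcess_nonpos_iff.mp <| hA.nonpos_of_comp_le_mul hself.subset
    continuous_minBallExcess.continuousOn hc0 hc1 hcontract x hx
end

section
/- Let I = [a,b], J = [c,d] with a < b and c < d, let δ = max{|a|, |b|, |c|, |d|}, let θ > 0, and equip I × J × ℝ with the metric ρ((x,y,z),(x',y',z')) = |x−x'| + |y−y'| + θ|z−z'|. Let F : I × J × ℝ → ℝ³ be given by F(x,y,z) = (a₁x + b₁, c₁y + d₁, e·x + f·y + g·z + α·xy + β) with a₁, c₁ ≥ 0, g ≥ 0 and e, f, α, β, b₁, d₁ ∈ ℝ. Then for all (x,y,z), (x',y',z') ∈ I × J × ℝ, ρ(F(x,y,z), F(x',y',z')) ≤ C · ρ((x,y,z),(x',y',z')), where C = max{ a₁ + θ(|e| + δ|α|), c₁ + θ(|f| + δ|α|), g }. -/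
section LinearOrderedCommRing

variable {R : Type*} [CommRing R] [LinearOrder R] [IsStrictOrderedRing R]

theorem abs_affine_sub_affine (a b x x' : R) :
    |(a * x + b) - (a * x' + b)| = |a| * |x - x'| := by
  rw [← abs_mul]
  ring_nf

theorem abs_mul_sub_mul_le {δ x x' y y' : R} (hx : |x| ≤ δ) (hy' : |y'| ≤ δ) :
    |x * y - x' * y'| ≤ δ * |x - x'| + δ * |y - y'| :=
  calc |x * y - x' * y'| = |x * (y - y') + y' * (x - x')| := by ring_nf
    _ ≤ |x| * |y - y'| + |y'| * |x - x'| := by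
      rw [← abs_mul, ← abs_mul]
      exact abs_add_le _ _
    _ ≤ δ * |y - y'| + δ * |x - x'| := by gcongr
    _ = δ * |x - x'| + δ * |y - y'| := add_comm _ _

theorem abs_sub_affine_add_bilinear_le {δ x x' y y' : R} (hx : |x| ≤ δ) (hy' : |y'| ≤ δ)
    (e f g α β z z' : R) :
    |(e * x + f * y + g * z + α * (x * y) + β) - (e * x' + f * y' + g * z' + α * (x' * y') + β)|
      ≤ (|e| + δ * |α|) * |x - x'| + (|f| + δ * |α|) * |y - y'| + |g| * |z - z'| :=
  calc _ = |e * (x - x') + f * (y - y') + g * (z - z') + α * (x * y - x' * y')| := by ring_nf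
    _ ≤ |e| * |x - x'| + |f| * |y - y'| + |g| * |z - z'| + |α| * |x * y - x' * y'| := by
      simp only [← abs_mul]
      exact (abs_add_le _ _).trans <| add_le_add_left
        ((abs_add_le _ _).trans <| add_le_add_left (abs_add_le _ _) _) _
    _ ≤ |e| * |x - x'| + |f| * |y - y'| + |g| * |z - z'| + |α| * (δ * |x - x'| + δ * |y - y'|) := by
      gcongr
      exact abs_mul_sub_mul_le hx hy'
    _ = _ := by ring

end LinearOrderedCommRing

theorem F_contraction_estimate_general
    (a b c d θ : ℝ) (hθ : 0 < θ)
    (a₁ b₁ c₁ d₁ e f g α β : ℝ)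
    (ha₁ : 0 ≤ a₁) (hc₁ : 0 ≤ c₁) (hg : 0 ≤ g)
    (δ : ℝ) (hδ : δ = max (max |a| |b|) (max |c| |d|))
    (C : ℝ)
    (hC : C = max (max (a₁ + θ * (|e| + δ * |α|)) (c₁ + θ * (|f| + δ * |α|))) g) :
    ∀ x x' y y' z z' : ℝ,
      x ∈ Set.Icc a b → x' ∈ Set.Icc a b → y ∈ Set.Icc c d → y' ∈ Set.Icc c d →
      |(a₁ * x + b₁) - (a₁ * x' + b₁)| + |(c₁ * y + d₁) - (c₁ * y' + d₁)|
        + θ * |(e * x + f * y + g * z + α * (x * y) + β)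
            - (e * x' + f * y' + g * z' + α * (x' * y') + β)|
      ≤ C * (|x - x'| + |y - y'| + θ * |z - z'|) := by
  intro x x' y y' z z' hx _ _ hy'
  have hxδ : |x| ≤ δ := hδ ▸ le_max_of_le_left (abs_le_max_abs_abs hx.1 hx.2)
  have hy'δ : |y'| ≤ δ := hδ ▸ le_max_of_le_right (abs_le_max_abs_abs hy'.1 hy'.2)
  have hθz : 0 ≤ θ * |z - z'| := by positivity
  calc _ ≤ a₁ * |x - x'| + c₁ * |y - y'|
        + θ * ((|e| + δ * |α|) * |x - x'| + (|f| + δ * |α|) * |y - y'| + g * |z - z'|) := by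
        rw [abs_affine_sub_affine, abs_affine_sub_affine, abs_of_nonneg ha₁, abs_of_nonneg hc₁]
        gcongr
        simpa only [abs_of_nonneg hg] using abs_sub_affine_add_bilinear_le hxδ hy'δ e f g α β z z'
    _ = (a₁ + θ * (|e| + δ * |α|)) * |x - x'| + (c₁ + θ * (|f| + δ * |α|)) * |y - y'|
        + g * (θ * |z - z'|) := by ring
    _ ≤ C * |x - x'| + C * |y - y'| + C * (θ * |z - z'|) := by
        rw [hC]
        gcongr
        exacts [le_max_of_le_left (le_max_left _ _), le_max_of_le_left (le_max_right _ _),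
          le_max_right _ _]
    _ = _ := by ring

/-- Let `I = [a,b]`, `J = [c,d]`, `δ = max{|a|,|b|,|c|,|d|}`, `θ > 0`, and let
`F(x,y,z) = (a₁x + b₁, c₁y + d₁, ex + fy + gz + αxy + β)` with `a₁, c₁, g ≥ 0`.
Then, with respect to `ρ((x,y,z),(x',y',z')) = |x−x'| + |y−y'| + θ|z−z'|`,
`ρ(F(x,y,z), F(x',y',z')) ≤ C ρ((x,y,z),(x',y',z'))` for all points of `I × J × ℝ`,
where `C = max{a₁ + θ(|e| + δ|α|), c₁ + θ(|f| + δ|α|), g}`. -/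
theorem F_contraction_estimate
    (a b c d θ : ℝ) (hab : a < b) (hcd : c < d) (hθ : 0 < θ)
    (a₁ b₁ c₁ d₁ e f g α β : ℝ)
    (ha₁ : 0 ≤ a₁) (hc₁ : 0 ≤ c₁) (hg : 0 ≤ g)
    (δ : ℝ) (hδ : δ = max (max |a| |b|) (max |c| |d|))
    (C : ℝ)
    (hC : C = max (max (a₁ + θ * (|e| + δ * |α|)) (c₁ + θ * (|f| + δ * |α|))) g) :
    ∀ x x' y y' z z' : ℝ,
      x ∈ Set.Icc a b → x' ∈ Set.Icc a b → y ∈ Set.Icc c d → y' ∈ Set.Icc c d →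
      |(a₁ * x + b₁) - (a₁ * x' + b₁)| + |(c₁ * y + d₁) - (c₁ * y' + d₁)|
        + θ * |(e * x + f * y + g * z + α * (x * y) + β)
            - (e * x' + f * y' + g * z' + α * (x' * y') + β)|
      ≤ C * (|x - x'| + |y - y'| + θ * |z - z'|) :=
  F_contraction_estimate_general a b c d θ hθ a₁ b₁ c₁ d₁ e f g α β ha₁ hc₁ hg δ hδ C hC
end
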